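/- arXiv:1208.0175 — 2 statements merged into one kernel-verified Lean document; each statement's English description precedes it below -/
import Mathlib

section
/- Let p > 3 be a prime. For any z ∈ ℤ_p^*, log_p(z) ≡ -p·Q_p(z) (mod p²), where log_p is the Iwasawa p-adic logarithm. -/
/-!
Since `logp` is additive, `(p - 1) • logp z = logp (z ^ (p - 1)) = log (1 + p w)`, which is given
by the logarithm series at `x = p w`. For `p` odd and `‖x‖ ≤ p⁻¹`, every term `± x ^ n / n` with
`n ≥ 2` has norm at most `p ^ (v_p(n) - n) ≤ p⁻²`, so the series is `≡ x (mod p²)`. Hence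
`(p - 1) (logp z + p a) ≡ p w - p a ≡ 0 (mod p²)` for `a ≡ w (mod p)`, and `p - 1` is a unit.
-/

namespace Padic

variable {p : ℕ} [Fact p.Prime]

/-- The series of `log (1 + x)`. -/
noncomputable def logSeries (x : ℚ_[p]) : ℚ_[p] :=
  ∑' k : ℕ, (-1) ^ k * x ^ (k + 1) / (k + 1)

lemma norm_pow_div_natCast (x : ℚ_[p]) {n : ℕ} (hn : n ≠ 0) :
    ‖x ^ n / n‖ = ‖x‖ ^ n * (p : ℝ) ^ padicValNat p n := by
  rw [norm_div, norm_pow, norm_eq_zpow_neg_valuation (Nat.cast_ne_zero.mpr hn),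
    valuation_natCast, zpow_neg, zpow_natCast, div_inv_eq_mul]

lemma norm_logSeries_term (x : ℚ_[p]) (k : ℕ) :
    ‖(-1) ^ k * x ^ (k + 1) / (k + 1)‖ = ‖x‖ ^ (k + 1) * (p : ℝ) ^ padicValNat p (k + 1) := by
  rw [mul_div_assoc, norm_mul, norm_pow, norm_neg, norm_one, one_pow, one_mul,
    ← norm_pow_div_natCast x k.succ_ne_zero, Nat.cast_succ]

lemma summable_logSeries {x : ℚ_[p]} (hx : ‖x‖ < 1) :
    Summable fun k : ℕ ↦ (-1) ^ k * x ^ (k + 1) / (k + 1) := by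
  have hgeom : Summable fun k : ℕ ↦ ((k + 1 : ℕ) : ℝ) * ‖x‖ ^ (k + 1) := by
    have h := summable_pow_mul_geometric_of_norm_lt_one 1 (by rwa [norm_norm] : ‖‖x‖‖ < 1)
    simp only [pow_one] at h
    exact (summable_nat_add_iff 1).mpr h
  refine .of_norm_bounded hgeom fun k ↦ ?_
  rw [norm_logSeries_term, mul_comm]
  gcongr
  exact_mod_cast Nat.le_of_dvd k.succ_pos pow_padicValNat_dvd

lemma padicValNat_add_two_le (hp : p ≠ 2) (k : ℕ) : padicValNat p (k + 2) ≤ k := by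
  have h3 : 3 ≤ p := lt_of_le_of_ne (Nat.Prime.two_le Fact.out) (Ne.symm hp)
  have hlt : k + 2 < p ^ (k + 1) := calc
    k + 2 < 3 ^ (k + 1) := by
      induction k with
      | zero => norm_num
      | succ k ih => rw [pow_succ]; omega
    _ ≤ p ^ (k + 1) := Nat.pow_le_pow_left h3 _
  exact (padicValNat_le_nat_log _).trans (Nat.lt_succ_iff.mp (Nat.log_lt_of_lt_pow (by omega) hlt))

lemma norm_logSeries_sub_le (hp : p ≠ 2) {x : ℚ_[p]} (hx : ‖x‖ ≤ (p : ℝ)⁻¹) :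
    ‖logSeries x - x‖ ≤ (p : ℝ)⁻¹ ^ 2 := by
  have hx1 : ‖x‖ < 1 := hx.trans_lt (inv_lt_one_of_one_lt₀ (mod_cast (Nat.Prime.one_lt Fact.out)))
  rw [logSeries, (summable_logSeries hx1).tsum_eq_zero_add]
  simp only [pow_zero, zero_add, Nat.cast_zero, div_one, one_mul, pow_one, add_sub_cancel_left]
  refine IsUltrametricDist.norm_tsum_le_of_forall_le_of_nonneg (by positivity) fun k ↦ ?_
  rw [norm_logSeries_term]
  calc ‖x‖ ^ (k + 1 + 1) * (p : ℝ) ^ padicValNat p (k + 1 + 1)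
      ≤ (p : ℝ)⁻¹ ^ (k + 2) * (p : ℝ) ^ k := by
        gcongr
        · exact_mod_cast (Nat.Prime.one_le Fact.out)
        · exact_mod_cast padicValNat_add_two_le hp k
    _ = (p : ℝ)⁻¹ ^ 2 := by
        have hp0 : (p : ℝ) ≠ 0 := mod_cast (Nat.Prime.ne_zero Fact.out)
        rw [pow_add, inv_pow, inv_pow]
        field_simp

end Padic

namespace PadicInt

variable {p : ℕ} [Fact p.Prime]

lemma norm_p_mul_le (y : ℤ_[p]) : ‖(p : ℚ_[p]) * y‖ ≤ (p : ℝ)⁻¹ := by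
  rw [norm_mul, Padic.norm_p]
  exact mul_le_of_le_one_right (by positivity) (norm_le_one y)

lemma norm_p_mul_lt_one (y : ℤ_[p]) : ‖(p : ℚ_[p]) * y‖ < 1 :=
  (norm_p_mul_le y).trans_lt (inv_lt_one_of_one_lt₀ (mod_cast (Nat.Prime.one_lt Fact.out)))

lemma sq_dvd_sub_of_coe_eq_logSeries (hp : p ≠ 2) {L y : ℤ_[p]}
    (hL : (L : ℚ_[p]) = Padic.logSeries ((p : ℚ_[p]) * (y : ℚ_[p]))) :
    (p : ℤ_[p]) ^ 2 ∣ L - p * y := by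
  rw [← Ideal.mem_span_singleton, ← norm_le_pow_iff_mem_span_pow, norm_def, coe_sub, coe_mul,
    coe_natCast, hL, Nat.cast_ofNat, zpow_neg, zpow_ofNat, ← inv_pow]
  exact Padic.norm_logSeries_sub_le hp (norm_p_mul_le y)

end PadicInt

lemma map_pow_eq_nsmul_of_map_mul {M A : Type*} [Monoid M] [AddCancelMonoid A] {f : M → A}
    (hf : ∀ u v, f (u * v) = f u + f v) (u : M) (n : ℕ) : f (u ^ n) = n • f u := by
  induction n with
  | zero => simpa using hf 1 1
  | succ n ih => rw [pow_succ, hf, ih, succ_nsmul]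

/- Here `w = (z ^ (p - 1) - 1) / p`, and the Fermat quotient, its residue mod `p`, is `w.appr 1`. -/
theorem statement_1_general (p : ℕ) [Fact p.Prime] (hp : 3 < p)
    (logp : ℤ_[p]ˣ → ℤ_[p])
    (hlog_mul : ∀ u v : ℤ_[p]ˣ, logp (u * v) = logp u + logp v)
    (hlog_series : ∀ u : ℤ_[p]ˣ, ‖((u : ℤ_[p]) : ℚ_[p]) - 1‖ < 1 →
      ((logp u : ℤ_[p]) : ℚ_[p]) =
        ∑' k : ℕ, (-1) ^ k * (((u : ℤ_[p]) : ℚ_[p]) - 1) ^ (k + 1) / (k + 1))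
    (z : ℤ_[p]ˣ) (w : ℤ_[p]) (hw : (z : ℤ_[p]) ^ (p - 1) - 1 = p * w) :
    (p : ℤ_[p]) ^ 2 ∣ logp z + p * (w.appr 1) := by
  have hu : ((z ^ (p - 1) : ℤ_[p]ˣ) : ℚ_[p]) - 1 = p * w := by
    exact_mod_cast congrArg ((↑) : ℤ_[p] → ℚ_[p]) hw
  have hlog : (p : ℤ_[p]) ^ 2 ∣ (p - 1 : ℕ) * logp z - p * w := by
    refine PadicInt.sq_dvd_sub_of_coe_eq_logSeries (by omega) ?_
    rw [← nsmul_eq_mul, ← map_pow_eq_nsmul_of_map_mul hlog_mul,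
      hlog_series _ (hu ▸ PadicInt.norm_p_mul_lt_one w), hu]
    rfl
  have happr : (p : ℤ_[p]) ∣ w - w.appr 1 := by
    simpa [Ideal.mem_span_singleton] using PadicInt.appr_spec 1 w
  have hunit : IsUnit ((p - 1 : ℕ) : ℤ_[p]) :=
    PadicInt.isUnit_iff.mpr PadicInt.norm_natCast_p_sub_one
  refine hunit.dvd_mul_left.mp ?_
  have hexpand : ((p - 1 : ℕ) : ℤ_[p]) * (logp z + p * w.appr 1) =
      ((p - 1 : ℕ) * logp z - p * w) + p * (w - w.appr 1) + p ^ 2 * w.appr 1 := by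
    rw [Nat.cast_pred (Nat.Prime.pos Fact.out)]
    ring
  rw [hexpand]
  refine dvd_add (dvd_add hlog ?_) (dvd_mul_right _ _)
  exact sq (p : ℤ_[p]) ▸ mul_dvd_mul_left _ happr

theorem statement_1 (p : ℕ) [Fact p.Prime] (hp : 3 < p)
    (logp : ℤ_[p]ˣ → ℤ_[p])
    (hlog_mul : ∀ u v : ℤ_[p]ˣ, logp (u * v) = logp u + logp v)
    (hlog_root : ∀ u : ℤ_[p]ˣ, (∃ m : ℕ, 0 < m ∧ u ^ m = 1) → logp u = 0)
    (hlog_series : ∀ u : ℤ_[p]ˣ, ‖((u : ℤ_[p]) : ℚ_[p]) - 1‖ < 1 →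
      ((logp u : ℤ_[p]) : ℚ_[p]) =
        ∑' k : ℕ, (-1) ^ k * (((u : ℤ_[p]) : ℚ_[p]) - 1) ^ (k + 1) / (k + 1))
    (z : ℤ_[p]ˣ) (w : ℤ_[p]) (hw : (z : ℤ_[p]) ^ (p - 1) - 1 = p * w) :
    (p : ℤ_[p]) ^ 2 ∣ logp z + p * (w.appr 1) :=
  statement_1_general p hp logp hlog_mul hlog_series z w hw
end

section
/- Let K/ℚ be a real abelian extension of degree g and let p > 3 be a prime. For any integer n ≥ 1, there exists a fundamental system of units of O_K such that R_p(K) ≡ (-p)^{g-1} R^{(p,n)}(K) (mod p^{n+g}). -/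
/-!
**Statement 4.**  Let `K/ℚ` be a real abelian extension of degree `g` and let `p > 3` be a
prime.  For any integer `n ≥ 1`, there exists a fundamental system of units of `𝓞 K` such
that `R_p(K) ≡ (-p)^{g-1}·R^{(p,n)}(K)  (mod p^{n+g})`.

Setup (following the paper):
* `K` is a number field, Galois over `ℚ` with abelian Galois group (`hab`), totally real
  (`hreal`); `g = Module.finrank ℚ K`.
* A fixed embedding of `ℚ^alg` into `ℚ_p^alg` is chosen; composing it with the `g` real
  embeddings of `K` yields the `g` distinct embeddings
  `σ : Fin g → (K →+* AlgebraicClosure ℚ_[p])` (`hσ`: pairwise distinct, hence all of them).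
* The Iwasawa `p`-adic logarithm is represented by `logp` with its characterizing properties.
* `R_p(K) = det(log_p(σ_j(ε_k)))_{j,k=1,…,g-1}` is Leopoldt's `p`-adic regulator.
* For `z ∈ ℤ_p^*` (more generally, a `p`-adic unit `z` as below), writing `z = ω(z)·⟨z⟩` with
  `ω(z)` a root of unity and `⟨z⟩ = 1 + p·z̃`, the quantity `Q_{p,n}(z)` is the truncation
  (residue) of `-(1/p)·log_p(1 + p·z̃)` modulo `p^{n+1}`.  Since the Iwasawa logarithm kills
  roots of unity, `log_p(1 + p·z̃) = log_p(z)`, so `Q_{p,n}(z)` is characterized by: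
  `Q_{p,n}(z) < p^{n+1}` and `p·Q_{p,n}(z) ≡ -log_p(z)  (mod p^{n+2})`.  The matrix
  `Q j k = Q_{p,n}(σ_j(ε_k))` is specified this way by `hQ` (congruences in the ring of
  integers of `ℚ_p^alg` are expressed via `IsIntegral ℤ_[p]` of the quotient by the
  appropriate power of `p`).
* `R^{(p,n)}(K) = det(Q_{p,n}(σ_j(ε_k)))_{j,k=1,…,g-1}` is the `p`-adic regulator mod `p^n`.
-/

open NumberField in
/-- `ε` is a fundamental system of units of `𝓞 K` (for `K` real abelian of degree `g`, the
unit rank is `g - 1`): the `ε k` are multiplicatively independent and, together with the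
roots of unity, they generate the full unit group. -/
def IsFundamentalSystem (K : Type*) [Field K] [NumberField K]
    (ε : Fin (Module.finrank ℚ K - 1) → (𝓞 K)ˣ) : Prop :=
  (∀ c : Fin (Module.finrank ℚ K - 1) → ℤ, IsOfFinOrder (∏ k, ε k ^ c k) → c = 0) ∧
    ∀ u : (𝓞 K)ˣ, ∃ (ζ : (𝓞 K)ˣ) (c : Fin (Module.finrank ℚ K - 1) → ℤ),
      IsOfFinOrder ζ ∧ u = ζ * ∏ k, ε k ^ c k

noncomputable instance (p : ℕ) [Fact p.Prime] : Algebra ℤ_[p] (AlgebraicClosure ℚ_[p]) :=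
  ((algebraMap ℚ_[p] (AlgebraicClosure ℚ_[p])).comp (algebraMap ℤ_[p] ℚ_[p])).toAlgebra

/-!
Write `L j k = log_p(σ_j(ε_k))`. The defining congruence of `Q_{p,n}` says
`L j k = -p · (Q j k - p^{n+1} E j k)` with `E j k` integral, so
`det L = (-p)^{g-1} det(Q - p^{n+1} E)`, and `det(Q - p^{n+1} E) ≡ det Q (mod p^{n+1})` because
the determinant is a polynomial in the entries. Any fundamental system (here the one given by
Dirichlet's unit theorem, whose rank is `g - 1` for a totally real field) works.
-/

theorem Matrix.dvd_det_add_smul_sub_det {R ι : Type*} [CommRing R] [Fintype ι] [DecidableEq ι]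
    (c : R) (A E : Matrix ι ι R) : c ∣ (A + c • E).det - A.det := by
  rw [← Ideal.mem_span_singleton, ← Ideal.Quotient.eq, RingHom.map_det, RingHom.map_det]
  congr 1
  ext j k
  simp [Ideal.Quotient.eq_zero_iff_mem.mpr (Ideal.mem_span_singleton_self c)]

theorem isIntegral_div_det_sub_neg_pow_mul_det {R F ι : Type*} [CommRing R] [Field F]
    [Algebra R F] [Fintype ι] [DecidableEq ι] {π : F} (hπ0 : π ≠ 0) (hπ : IsIntegral R π)
    (k : ℕ) (L Q : Matrix ι ι F) (hQ : ∀ i j, IsIntegral R (Q i j))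
    (hLQ : ∀ i j, IsIntegral R ((L i j + π * Q i j) / π ^ (k + 1))) :
    IsIntegral R ((L.det - (-π) ^ Fintype.card ι * Q.det) / π ^ (k + Fintype.card ι)) := by
  let T := integralClosure R F
  let φ : T →+* F := T.val.toRingHom
  let π' : T := ⟨π, hπ⟩
  let Q' : Matrix ι ι T := fun i j => ⟨Q i j, hQ i j⟩
  let E : Matrix ι ι T := fun i j => ⟨(L i j + π * Q i j) / π ^ (k + 1), hLQ i j⟩
  have hL : L = (-π) • (Q' + π' ^ k • -E).map φ := by
    ext i j
    simp only [Matrix.smul_apply, Matrix.map_apply, Matrix.add_apply, Matrix.neg_apply,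
      smul_eq_mul, map_add, map_mul, map_pow, map_neg]
    change L i j = -π * (Q i j + π ^ k * -((L i j + π * Q i j) / π ^ (k + 1)))
    field_simp
    ring
  obtain ⟨d, hd⟩ := Matrix.dvd_det_add_smul_sub_det (π' ^ k) Q' (-E)
  have hdet : L.det = (-π) ^ Fintype.card ι * (Q.det + π ^ k * φ d) := by
    rw [hL, Matrix.det_smul, ← RingHom.mapMatrix_apply, ← RingHom.map_det,
      eq_add_of_sub_eq hd, map_add, map_mul, map_pow, RingHom.map_det, add_comm]
    rfl
  have key : (L.det - (-π) ^ Fintype.card ι * Q.det) / π ^ (k + Fintype.card ι)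
      = φ ((-1) ^ Fintype.card ι * d) := by
    rw [hdet, map_mul, map_pow, map_neg, map_one]
    field_simp
    ring
  rw [key]
  exact ((-1) ^ Fintype.card ι * d).2

namespace NumberField.Units

variable (K : Type*) [Field K] [NumberField K]

theorem rank_eq_finrank_sub_one [IsTotallyReal K] : rank K = Module.finrank ℚ K - 1 := by
  rw [rank, IsTotallyReal.finrank, InfinitePlace.card_eq_nrRealPlaces_add_nrComplexPlaces,
    IsTotallyReal.nrComplexPlaces_eq_zero, add_zero]

theorem eq_zero_of_prod_fundSystem_zpow_mem_torsion {f : Fin (rank K) → ℤ}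
    (hf : ∏ i, fundSystem K i ^ f i ∈ torsion K) : f = 0 :=
  (fun_eq_repr K (one_mem _) (one_mul _).symm).trans (fun_eq_repr K hf (by simp)).symm

theorem isFundamentalSystem_fundSystem (h : rank K = Module.finrank ℚ K - 1) :
    IsFundamentalSystem K (fun k => fundSystem K (finCongr h.symm k)) := by
  set e := finCongr h.symm
  refine ⟨fun c hc => ?_, fun u => ?_⟩
  · have hprod : ∏ k, fundSystem K (e k) ^ c k = ∏ i, fundSystem K i ^ c (e.symm i) :=
      Fintype.prod_equiv e _ _ (by simp)
    have hc' := eq_zero_of_prod_fundSystem_zpow_mem_torsion K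
      ((CommGroup.mem_torsion _).mpr (hprod ▸ hc))
    funext k
    simpa using congrFun hc' (e k)
  · obtain ⟨⟨ζ, c⟩, hu, -⟩ := exist_unique_eq_mul_prod K u
    refine ⟨ζ, c ∘ e, (CommGroup.mem_torsion _).mp ζ.2, hu.trans ?_⟩
    rw [← e.prod_comp]
    rfl

end NumberField.Units

open NumberField in
theorem statement_4_general (p : ℕ) [Fact p.Prime]
    (K : Type*) [Field K] [NumberField K]
    (hreal : ∀ φ : K →+* ℂ, ComplexEmbedding.IsReal φ)
    -- the embeddings of `K` into the algebraic closure of `ℚ_p`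
    (σ : Fin (Module.finrank ℚ K) → (K →+* AlgebraicClosure ℚ_[p]))
    -- the Iwasawa `p`-adic logarithm and its characterizing properties
    (logp : AlgebraicClosure ℚ_[p] → AlgebraicClosure ℚ_[p])
    (n : ℕ) :
    -- there exists a fundamental system of units with
    -- `R_p(K) ≡ (-p)^{g-1} R^{(p,n)}(K)  (mod p^{n+g})`
    ∃ ε : Fin (Module.finrank ℚ K - 1) → (𝓞 K)ˣ, IsFundamentalSystem K ε ∧
      ∀ Q : Matrix (Fin (Module.finrank ℚ K - 1)) (Fin (Module.finrank ℚ K - 1)) ℕ,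
        (∀ j k, Q j k < p ^ (n + 1) ∧
          IsIntegral ℤ_[p]
            ((logp (σ (Fin.castLE (Nat.sub_le _ 1) j) ((ε k : 𝓞 K) : K)) + p * Q j k) /
              (p : AlgebraicClosure ℚ_[p]) ^ (n + 2))) →
        IsIntegral ℤ_[p]
          ((Matrix.det
              (Matrix.of fun j k =>
                logp (σ (Fin.castLE (Nat.sub_le _ 1) j) ((ε k : 𝓞 K) : K))) -
            (-(p : AlgebraicClosure ℚ_[p])) ^ (Module.finrank ℚ K - 1) *
              Matrix.det (Matrix.of fun j k => ((Q j k : AlgebraicClosure ℚ_[p])))) /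
            (p : AlgebraicClosure ℚ_[p]) ^ (n + Module.finrank ℚ K)) := by
  have : IsTotallyReal K := ⟨fun w => InfinitePlace.isReal_iff.mpr (hreal w.embedding)⟩
  refine ⟨_, Units.isFundamentalSystem_fundSystem K (Units.rank_eq_finrank_sub_one K),
    fun Q hQ => ?_⟩
  have hp0 : ((p : ℕ) : AlgebraicClosure ℚ_[p]) ≠ 0 :=
    Nat.cast_ne_zero.mpr (Fact.out : p.Prime).ne_zero
  have hg : n + Module.finrank ℚ K = n + 1 + (Module.finrank ℚ K - 1) := by
    have : 0 < Module.finrank ℚ K := Module.finrank_pos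
    omega
  have hdet := isIntegral_div_det_sub_neg_pow_mul_det hp0 (isIntegral_natCast p) (n + 1) _
    (Q.map ((↑) : ℕ → AlgebraicClosure ℚ_[p])) (fun _ _ => isIntegral_natCast _)
    (fun j k => (hQ j k).2)
  rwa [Fintype.card_fin, ← hg] at hdet

open NumberField in
theorem statement_4 (p : ℕ) [Fact p.Prime] (hp : 3 < p)
    (K : Type*) [Field K] [NumberField K] [IsGalois ℚ K]
    (hab : ∀ σ τ : K ≃ₐ[ℚ] K, σ * τ = τ * σ)
    (hreal : ∀ φ : K →+* ℂ, ComplexEmbedding.IsReal φ)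
    -- the embeddings of `K` into the algebraic closure of `ℚ_p`
    (σ : Fin (Module.finrank ℚ K) → (K →+* AlgebraicClosure ℚ_[p]))
    (hσ : Function.Injective σ)
    -- the Iwasawa `p`-adic logarithm and its characterizing properties
    (logp : AlgebraicClosure ℚ_[p] → AlgebraicClosure ℚ_[p])
    (hlog_mul : ∀ x y : AlgebraicClosure ℚ_[p], x ≠ 0 → y ≠ 0 →
      logp (x * y) = logp x + logp y)
    (hlog_root : ∀ x : AlgebraicClosure ℚ_[p], (∃ m : ℕ, 0 < m ∧ x ^ m = 1) → logp x = 0)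
    (hlog_p : logp ((p : ℕ) : AlgebraicClosure ℚ_[p]) = 0)
    (hlog_series : ∀ x : ℚ_[p], ‖x‖ < 1 →
      logp (algebraMap ℚ_[p] (AlgebraicClosure ℚ_[p]) (1 + x)) =
        algebraMap ℚ_[p] (AlgebraicClosure ℚ_[p])
          (∑' k : ℕ, (-1) ^ k * x ^ (k + 1) / (k + 1)))
    (n : ℕ) (hn : 1 ≤ n) :
    -- there exists a fundamental system of units with
    -- `R_p(K) ≡ (-p)^{g-1} R^{(p,n)}(K)  (mod p^{n+g})`
    ∃ ε : Fin (Module.finrank ℚ K - 1) → (𝓞 K)ˣ, IsFundamentalSystem K ε ∧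
      ∀ Q : Matrix (Fin (Module.finrank ℚ K - 1)) (Fin (Module.finrank ℚ K - 1)) ℕ,
        (∀ j k, Q j k < p ^ (n + 1) ∧
          IsIntegral ℤ_[p]
            ((logp (σ (Fin.castLE (Nat.sub_le _ 1) j) ((ε k : 𝓞 K) : K)) + p * Q j k) /
              (p : AlgebraicClosure ℚ_[p]) ^ (n + 2))) →
        IsIntegral ℤ_[p]
          ((Matrix.det
              (Matrix.of fun j k =>
                logp (σ (Fin.castLE (Nat.sub_le _ 1) j) ((ε k : 𝓞 K) : K))) -
            (-(p : AlgebraicClosure ℚ_[p])) ^ (Module.finrank ℚ K - 1) *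
              Matrix.det (Matrix.of fun j k => ((Q j k : AlgebraicClosure ℚ_[p])))) /
            (p : AlgebraicClosure ℚ_[p]) ^ (n + Module.finrank ℚ K)) :=
  statement_4_general p K hreal σ logp n
end
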